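/- Let μ be a singular cardinal of countable cofinality and assume κ = μ⁺ = 2^μ. If T is a κ-Kurepa subtree of ^{<κ}κ, then the set [T] is not a continuous image of ^κκ. -/

import Mathlib

open Cardinal Set

noncomputable section

namespace GBaire

universe u

/-- The underlying well-ordered set of the cardinal `κ`, i.e. the type of ordinals `< κ`. -/
abbrev K (κ : Cardinal.{u}) : Type u := κ.ord.ToType

/-- The set `^{<κ}κ` of all functions from a proper initial segment of `κ` to `κ`. -/
abbrev PreFun (κ : Cardinal.{u}) : Type u := Σ α : K κ, ({β : K κ // β < α} → K κ)

variable (κ : Cardinal.{u})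

/-- The restriction `x ↾ α` of a function `x ∈ ^κκ` to the initial segment determined by `α`. -/
def resT (x : K κ → K κ) (α : K κ) : PreFun κ := ⟨α, fun β => x β.1⟩

/-- The restriction of `s ∈ ^{<κ}κ` to (the minimum of its domain and) `γ`.  When
`γ ≤ s.1` this is the restriction `s ↾ γ`; otherwise it equals `s`. -/
def cut (s : PreFun κ) (γ : K κ) : PreFun κ :=
  ⟨min γ s.1, fun β => s.2 ⟨β.1, lt_of_lt_of_le β.2 (min_le_right _ _)⟩⟩

/-- A subtree of `^{<κ}κ`: a set of elements of `^{<κ}κ` closed under restrictions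
to smaller ordinals. -/
def IsSubtree (T : Set (PreFun κ)) : Prop :=
  ∀ s ∈ T, ∀ γ : K κ, γ < s.1 → cut κ s γ ∈ T

/-- The `α`-th level `T(α)` of `T`. -/
def level (T : Set (PreFun κ)) (α : K κ) : Set (PreFun κ) := {s ∈ T | s.1 = α}

/-- The set `[T]` of cofinal branches of `T`, i.e. all `x ∈ ^κκ` all of whose
restrictions lie in `T`. -/
def branches (T : Set (PreFun κ)) : Set (K κ → K κ) := {x | ∀ α : K κ, resT κ x α ∈ T}

/-- `T` is a `κ`-Kurepa subtree of `^{<κ}κ`: a subtree all of whose levels are nonempty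
of cardinality `< κ` and with at least `κ⁺` many cofinal branches. -/
def IsKurepa (T : Set (PreFun κ)) : Prop :=
  IsSubtree κ T ∧ (∀ α : K κ, (level κ T α).Nonempty ∧ #(level κ T α) < κ) ∧
    Order.succ κ ≤ #(branches κ T)

/-- The basic open set `N_s = {x ∈ ^κκ | s ⊆ x}`. -/
def Nbhd (s : PreFun κ) : Set (K κ → K κ) := {x | resT κ x s.1 = s}

/-- The topology of the generalized Baire space `^κκ`, generated by the sets `N_s`. -/
def baire : TopologicalSpace (K κ → K κ) :=
  TopologicalSpace.generateFrom {U | ∃ s : PreFun κ, U = Nbhd κ s}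

/-- `X` is a continuous image of `^κκ`: there is a continuous surjection from `^κκ`
onto `X` (with the subspace topology). -/
def IsContImage (X : Set (K κ → K κ)) : Prop :=
  letI := baire κ
  ∃ f : (K κ → K κ) → X, Continuous f ∧ Function.Surjective f

/-- `X` is a retract of `^κκ`: there is a continuous `r : ^κκ → ^κκ` with range
contained in `X` that is the identity on `X`. -/
def IsRetract (X : Set (K κ → K κ)) : Prop :=
  letI := baire κ
  ∃ r : (K κ → K κ) → (K κ → K κ),
    Continuous r ∧ Set.range r ⊆ X ∧ ∀ x ∈ X, r x = x

/-- `y` is an isolated point of `Y ⊆ ^κκ`. -/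
def IsIsolatedIn (Y : Set (K κ → K κ)) (y : K κ → K κ) : Prop :=
  y ∈ Y ∧ ∃ α : K κ, Nbhd κ (resT κ y α) ∩ Y = {y}

/-- `T` is slim: `|T(α)| ≤ |α|` for all sufficiently large `α < κ`. -/
def IsSlim (T : Set (PreFun κ)) : Prop :=
  ∃ α₀ : K κ, ∀ α : K κ, α₀ ≤ α → #(level κ T α) ≤ #{β : K κ // β < α}

/-- `C ⊆ κ` is closed: it contains every least upper bound of a nonempty subset of `C`. -/
def ClosedIn (C : Set (K κ)) : Prop :=
  ∀ A ⊆ C, A.Nonempty → ∀ x : K κ, IsLUB A x → x ∈ C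

/-- `C ⊆ κ` is unbounded in `κ`. -/
def UnboundedIn (C : Set (K κ)) : Prop := ∀ x : K κ, ∃ y ∈ C, x < y

/-- `S ⊆ κ` is stationary in `κ`: it meets every closed unbounded subset of `κ`. -/
def Stationary (S : Set (K κ)) : Prop :=
  ∀ C : Set (K κ), ClosedIn κ C → UnboundedIn κ C → (S ∩ C).Nonempty

/-- `T` is stationary slim: `|T(α)| ≤ |α|` for stationarily many `α < κ`. -/
def StatSlim (T : Set (PreFun κ)) : Prop :=
  Stationary κ {α : K κ | #(level κ T α) ≤ #{β : K κ // β < α}}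

/-- `α` is a limit ordinal (as an element of `κ`): it is neither the least element
nor a successor. -/
def IsLimitElt (α : K κ) : Prop :=
  (∃ β : K κ, β < α) ∧ ∀ β : K κ, β < α → ∃ γ : K κ, β < γ ∧ γ < α

/-- The boundary `∂T` of a subtree `T`: the minimal elements of `^{<κ}κ \ T`. -/
def boundary (T : Set (PreFun κ)) : Set (PreFun κ) :=
  {t | t ∉ T ∧ ∀ γ : K κ, γ < t.1 → cut κ t γ ∈ T}

/-- `T` is superthin: for every limit ordinal `α < κ`, the set of elements of
`T ∪ ∂T` with domain `α` has cardinality `< κ`. -/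
def IsSuperthin (T : Set (PreFun κ)) : Prop :=
  ∀ α : K κ, IsLimitElt κ α → #{s ∈ T ∪ boundary κ T | s.1 = α} < κ

/-- `T` is pruned: every element of `T` has a proper extension in `T`. -/
def IsPruned (T : Set (PreFun κ)) : Prop :=
  ∀ s ∈ T, ∃ t ∈ T, s.1 < t.1 ∧ cut κ t s.1 = s

/-- `T` is `<κ`-closed: the union of every (strictly increasing with respect to proper
end-extension) sequence of elements of `T` indexed by an ordinal `< κ` again lies in `T`.
Here `u` is the union of the sequence `s` iff the domain of `u` is the least upper bound
of the domains of the `s ξ` and every `s ξ` is a restriction of `u`. -/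
def IsLtClosed (T : Set (PreFun κ)) : Prop :=
  ∀ (γ : K κ) (s : {ξ : K κ // ξ < γ} → PreFun κ),
    (∀ ξ ζ : {ξ : K κ // ξ < γ}, ξ < ζ → (s ξ).1 < (s ζ).1 ∧ cut κ (s ζ) (s ξ).1 = s ξ) →
    (∀ ξ, s ξ ∈ T) →
    ∀ u : PreFun κ, IsLUB (Set.range fun ξ => (s ξ).1) u.1 →
      (∀ ξ, cut κ u (s ξ).1 = s ξ) → u ∈ T

/-- `T` contains a Cantor subtree. -/
def HasCantorSubtree (T : Set (PreFun κ)) : Prop :=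
  ∃ (l : ℕ → K κ) (lam : K κ), StrictMono l ∧ IsLUB (Set.range l) lam ∧
    (level κ T lam).Nonempty ∧
    ∃ B ⊆ level κ T lam, ¬ B.Countable ∧
      ∀ n : ℕ, ((fun t => cut κ t (l n)) '' B).Countable

/-- proper end-extension on `^{<κ}κ`. -/
def pext (s t : PreFun κ) : Prop := s.1 < t.1 ∧ cut κ t s.1 = s

/-- A set `A ⊆ ^{<κ}κ`, regarded as a tree under proper end-extension, is trivially
coherent: it is order-isomorphic to a subtree of `^{<λ}2` (for `λ` its height) all of
whose elements `t` satisfy that `t⁻¹{0}` is finite.  (Here the comparison tree is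
realized as a subtree `U` of `^{<κ}κ` taking only the values `0` and `1`, i.e. values
with at most one predecessor, such that each `u ∈ U` takes the value `0`, i.e. the
value with no predecessor, only finitely often.) -/
def TriviallyCoherent (A : Set (PreFun κ)) : Prop :=
  ∃ U : Set (PreFun κ),
    IsSubtree κ U ∧
    (∀ u ∈ U, ∀ β : {b : K κ // b < u.1}, #{γ : K κ // γ < u.2 β} ≤ 1) ∧
    (∀ u ∈ U, {β : {b : K κ // b < u.1} | ¬ ∃ γ : K κ, γ < u.2 β}.Finite) ∧
    ∃ f : A → U, Function.Bijective f ∧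
      ∀ s t : A, pext κ s.1 t.1 ↔ pext κ (f s).1 (f t).1

/-- `T` is locally coherent: each of its proper initial segments `T ∩ ^{<α}κ` is
trivially coherent. -/
def LocallyCoherent (T : Set (PreFun κ)) : Prop :=
  ∀ α : K κ, TriviallyCoherent κ {s ∈ T | s.1 < α}

end GBaire

/-!
If `F : ^κκ → ^κκ` is continuous with more than `κ` values and `κ^{<κ} = κ`, then the union `B`
of all images `F[N_s]` of size `≤ κ` is small, and every basic open set whose image is large
splits into `μ` large basic open subsets whose images are already separated at one level
`β < κ`. Iterating this along finite sequences and fusing along `ω`-branches gives `μ^ℵ₀`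
points of `F[^κκ]` that are pairwise different below a single level `A < κ`, by regularity of
`κ`. For `F` onto `[T]` these restrictions lie in `T(A)`, so `μ^ℵ₀ ≤ |T(A)| < κ`; but König's
theorem gives `κ = μ⁺ ≤ μ^{cf μ} = μ^ℵ₀`.
-/

open Topology

namespace GBaire

section

variable {κ : Cardinal.{u}}

theorem resT_eq_resT_iff {x y : K κ → K κ} {α : K κ} :
    resT κ x α = resT κ y α ↔ ∀ ξ < α, x ξ = y ξ := by
  constructor
  · intro h ξ hξ
    exact congrFun (eq_of_heq (Sigma.mk.inj h).2) ⟨ξ, hξ⟩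
  · intro h
    exact congrArg (Sigma.mk α) (funext fun ξ => h ξ.1 ξ.2)

theorem resT_eq_resT_of_le {x y : K κ → K κ} {α γ : K κ} (h : resT κ x α = resT κ y α)
    (hγ : γ ≤ α) : resT κ x γ = resT κ y γ :=
  resT_eq_resT_iff.2 fun ξ hξ => resT_eq_resT_iff.1 h ξ (hξ.trans_le hγ)

theorem mem_Nbhd_resT_self (x : K κ → K κ) (α : K κ) : x ∈ Nbhd κ (resT κ x α) := rfl

theorem Nbhd_resT_anti {x : K κ → K κ} {γ α : K κ} (h : γ ≤ α) :
    Nbhd κ (resT κ x α) ⊆ Nbhd κ (resT κ x γ) :=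
  fun _ hz => resT_eq_resT_of_le hz h

theorem Nbhd_resT_bot [OrderBot (K κ)] (x : K κ → K κ) : Nbhd κ (resT κ x ⊥) = Set.univ :=
  eq_univ_of_forall fun _ => resT_eq_resT_iff.2 fun _ hξ => absurd hξ not_lt_bot

theorem Nbhd_nonempty [Nonempty (K κ)] (s : PreFun κ) : (Nbhd κ s).Nonempty :=
  ⟨fun ξ => if h : ξ < s.1 then s.2 ⟨ξ, h⟩ else Classical.arbitrary _,
    congrArg (Sigma.mk s.1) (funext fun ξ => dif_pos ξ.2)⟩

theorem exists_Nbhd_resT_subset_of_isOpen [Nonempty (K κ)] {U : Set (K κ → K κ)}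
    (hU : IsOpen[baire κ] U) {x : K κ → K κ} (hx : x ∈ U) :
    ∃ α : K κ, Nbhd κ (resT κ x α) ⊆ U := by
  induction hU generalizing x with
  | basic V hV =>
      obtain ⟨s, rfl⟩ := hV
      exact ⟨s.1, fun z hz => hz.trans hx⟩
  | univ => exact ⟨Classical.arbitrary _, subset_univ _⟩
  | inter U V _ _ ihU ihV =>
      obtain ⟨α, hα⟩ := ihU hx.1
      obtain ⟨β, hβ⟩ := ihV hx.2
      exact ⟨max α β, subset_inter ((Nbhd_resT_anti (le_max_left _ _)).trans hα)
        ((Nbhd_resT_anti (le_max_right _ _)).trans hβ)⟩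
  | sUnion S _ ih =>
      obtain ⟨V, hV, hxV⟩ := hx
      obtain ⟨α, hα⟩ := ih V hV hxV
      exact ⟨α, hα.trans (subset_sUnion_of_mem hV)⟩

theorem exists_forall_resT_map_eq [Nonempty (K κ)] {F : (K κ → K κ) → K κ → K κ}
    (hF : Continuous[baire κ, baire κ] F) (x : K κ → K κ) (β : K κ) :
    ∃ α : K κ, ∀ z ∈ Nbhd κ (resT κ x α), resT κ (F z) β = resT κ (F x) β := by
  let _ := baire κ
  exact exists_Nbhd_resT_subset_of_isOpen
    (hF.isOpen_preimage _ (TopologicalSpace.isOpen_generateFrom_of_mem ⟨_, rfl⟩))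
    (mem_Nbhd_resT_self (F x) β)

theorem exists_forall_lt_of_isRegular (hκ : κ.IsRegular) {ι : Type u} (g : ι → K κ)
    (hι : #ι < κ) : ∃ b : K κ, ∀ i, g i < b := by
  have hcof : ¬ IsCofinal (range g) := fun h => (Order.cof_le h).not_gt <| by
    rw [Ordinal.cof_toType, hκ.cof_ord]
    exact mk_range_le.trans_lt hι
  obtain ⟨b, hb⟩ := not_isCofinal_iff.1 hcof
  exact ⟨b, fun i => hb _ (mem_range_self i)⟩

theorem exists_injective_resT (hκ : κ.IsRegular) {ι : Type u} (hι : #ι < κ)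
    {y : ι → K κ → K κ} (hy : Function.Injective y) :
    ∃ β : K κ, Function.Injective fun i => resT κ (y i) β := by
  let D := {p : ι × ι // y p.1 ≠ y p.2}
  have hD : #D < κ := (mk_subtype_le _).trans_lt <| by
    rw [mk_prod, lift_id]
    exact mul_lt_of_lt hκ.aleph0_le hι hι
  obtain ⟨β, hβ⟩ := exists_forall_lt_of_isRegular hκ
    (fun p : D => (Function.ne_iff.1 p.2).choose) hD
  refine ⟨β, fun i j hij => by_contra fun hne => ?_⟩
  have hyne : y i ≠ y j := hy.ne hne
  exact (Function.ne_iff.1 hyne).choose_spec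
    (resT_eq_resT_iff.1 hij _ (hβ ⟨(i, j), hyne⟩))

theorem two_power_power_le {μ ν : Cardinal.{u}} (hμ : ℵ₀ ≤ μ) (hν : ν ≤ μ) :
    ((2 : Cardinal.{u}) ^ μ) ^ ν ≤ 2 ^ μ :=
  calc ((2 : Cardinal.{u}) ^ μ) ^ ν ≤ (2 ^ μ) ^ μ :=
        power_le_power_left (power_ne_zero _ two_ne_zero) hν
    _ = 2 ^ μ := by rw [← power_mul, mul_eq_self hμ]

theorem mk_preFun_le (hκ : ℵ₀ ≤ κ) (hpow : ∀ ν < κ, κ ^ ν ≤ κ) : #(PreFun κ) ≤ κ :=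
  calc #(PreFun κ) = sum fun α : K κ => #({β : K κ // β < α} → K κ) := mk_sigma _
    _ ≤ sum fun _ : K κ => κ := sum_le_sum _ _ fun α => by
        rw [← power_def, mk_ord_toType]
        exact hpow _ ((mk_Iio_lt α (by simp)).trans_eq (mk_ord_toType κ))
    _ = κ := by rw [sum_const', mk_ord_toType, mul_eq_self hκ]

/-- For `k ≤ n` every point of `s n` agrees with `s k` below `(s k).1`, so the limit may take
its value at `ξ` from the first `s k` whose length exceeds `ξ`. -/
theorem exists_forall_mem_Nbhd {s : ℕ → PreFun κ} (hs : Antitone fun n => Nbhd κ (s n))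
    (hne : ∀ n, (Nbhd κ (s n)).Nonempty) : ∃ z : K κ → K κ, ∀ n, z ∈ Nbhd κ (s n) := by
  classical
  choose x hx using hne
  refine ⟨fun ξ => if h : ∃ n, ξ < (s n).1 then x (Nat.find h) ξ else x 0 ξ, fun n => ?_⟩
  refine (resT_eq_resT_iff.2 fun ξ hξ => ?_).trans (hx n)
  have h : ∃ k, ξ < (s k).1 := ⟨n, hξ⟩
  have hk : x n ∈ Nbhd κ (s (Nat.find h)) := hs (Nat.find_min' h hξ) (hx n)
  rw [dif_pos h]
  exact resT_eq_resT_iff.1 ((hx _).trans hk.symm) ξ (Nat.find_spec h)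

/-- Nodes are indexed by reversed finite sequences, so that `N (i :: l)` is the `i`-th child
of `N l`. -/
theorem mk_arrow_nat_le_of_splitting_scheme [Nonempty (K κ)] {ι : Type u}
    {F : (K κ → K κ) → K κ → K κ} {N : List ι → PreFun κ}
    (hN : ∀ l i, Nbhd κ (N (i :: l)) ⊆ Nbhd κ (N l)) {β : List ι → K κ}
    (hsep : ∀ l i j, i ≠ j → ∀ z ∈ Nbhd κ (N (i :: l)), ∀ w ∈ Nbhd κ (N (j :: l)),
      resT κ (F z) (β l) ≠ resT κ (F w) (β l))
    {A : K κ} (hA : ∀ l, β l ≤ A) : #(ℕ → ι) ≤ #(range fun x => resT κ (F x) A) := by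
  classical
  let pre : (ℕ → ι) → ℕ → List ι := fun σ n => ((List.range n).map σ).reverse
  have hpre : ∀ σ n, pre σ (n + 1) = σ n :: pre σ n := by
    simp [pre, List.range_succ]
  choose z hz using fun σ : ℕ → ι =>
    exists_forall_mem_Nbhd (s := fun n => N (pre σ n))
      (antitone_nat_of_succ_le fun n => by simp only [hpre]; exact hN _ _)
      fun n => Nbhd_nonempty _
  refine mk_le_of_injective (f := fun σ => ⟨resT κ (F (z σ)) A, mem_range_self _⟩) ?_
  intro σ τ hστ
  by_contra hne
  have hdiff : ∃ n, σ n ≠ τ n := Function.ne_iff.1 hne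
  set n := Nat.find hdiff
  have hpre_eq : pre σ n = pre τ n := by
    simp only [pre, List.reverse_inj]
    exact List.map_congr_left fun m hm =>
      not_not.1 (Nat.find_min hdiff (List.mem_range.1 hm))
  refine hsep (pre σ n) (σ n) (τ n) (Nat.find_spec hdiff) (z σ) ?_ (z τ) ?_
    (resT_eq_resT_of_le (congrArg Subtype.val hστ) (hA _))
  · rw [← hpre]
    exact hz σ (n + 1)
  · rw [hpre_eq, ← hpre]
    exact hz τ (n + 1)

theorem exists_splitting [Nonempty (K κ)] (hκ : κ.IsRegular) {F : (K κ → K κ) → K κ → K κ}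
    (hF : Continuous[baire κ, baire κ] F) {ι : Type u} (hι : #ι < κ) {s : PreFun κ}
    {B : Set (K κ → K κ)} (hsB : #ι ≤ #(F '' Nbhd κ s \ B : Set _)) :
    ∃ (c : ι → PreFun κ) (β : K κ), (∀ i, Nbhd κ (c i) ⊆ Nbhd κ s) ∧
      (∀ i, ¬ F '' Nbhd κ (c i) ⊆ B) ∧
      ∀ i j, i ≠ j → ∀ z ∈ Nbhd κ (c i), ∀ w ∈ Nbhd κ (c j),
        resT κ (F z) β ≠ resT κ (F w) β := by
  obtain ⟨e⟩ := le_def _ _ |>.1 hsB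
  obtain ⟨β, hβ⟩ := exists_injective_resT hκ hι (y := fun i => (e i).1)
    (Subtype.val_injective.comp e.injective)
  have hpt : ∀ i, ∃ x ∈ Nbhd κ s, F x = (e i).1 := fun i => (e i).2.1
  choose x hxs hxe using hpt
  choose α hα using fun i => exists_forall_resT_map_eq hF (x i) β
  refine ⟨fun i => resT κ (x i) (max (α i) s.1), β, fun i => ?_, fun i hsub => ?_, ?_⟩
  · rw [← show Nbhd κ (resT κ (x i) s.1) = Nbhd κ s by rw [hxs i]]
    exact Nbhd_resT_anti (le_max_right _ _)
  · exact (e i).2.2 (hxe i ▸ hsub (mem_image_of_mem F (mem_Nbhd_resT_self _ _)))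
  · intro i j hij z hz w hw hzw
    refine hij (hβ ?_)
    simp only [← hxe]
    rw [← hα i z (Nbhd_resT_anti (le_max_left _ _) hz),
      ← hα j w (Nbhd_resT_anti (le_max_left _ _) hw), hzw]

theorem exists_superset_small_images (hκ : ℵ₀ ≤ κ) (hPre : #(PreFun κ) ≤ κ)
    (F : (K κ → K κ) → K κ → K κ) : ∃ B : Set (K κ → K κ), #B ≤ κ ∧
      ∀ s : PreFun κ, #(F '' Nbhd κ s) ≤ κ → F '' Nbhd κ s ⊆ B := by
  let S := {s : PreFun κ // #(F '' Nbhd κ s) ≤ κ}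
  refine ⟨⋃ s : S, F '' Nbhd κ s.1, ?_, fun s hs => subset_iUnion_of_subset ⟨s, hs⟩ le_rfl⟩
  calc #(⋃ s : S, F '' Nbhd κ s.1) ≤ #S * ⨆ s : S, #(F '' Nbhd κ s.1) := mk_iUnion_le _
    _ ≤ κ * κ := mul_le_mul' ((mk_subtype_le _).trans hPre) (ciSup_le' fun s => s.2)
    _ = κ := mul_eq_self hκ

theorem exists_mk_arrow_nat_le_mk_range_resT (hκ : κ.IsRegular) (hκℵ : ℵ₀ < κ)
    (hPre : #(PreFun κ) ≤ κ) {F : (K κ → K κ) → K κ → K κ}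
    (hF : Continuous[baire κ, baire κ] F) (hrange : κ < #(range F)) {ι : Type u}
    (hι : #ι < κ) : ∃ A : K κ, #(ℕ → ι) ≤ #(range fun x => resT κ (F x) A) := by
  have : Nonempty (K κ) := mk_ne_zero_iff.1 (by rw [mk_ord_toType]; exact hκ.ne_zero)
  let _ : OrderBot (K κ) := WellFoundedLT.toOrderBot _
  obtain ⟨B, hB, hsmall⟩ := exists_superset_small_images hκ.aleph0_le hPre F
  have hsplit : ∀ s : PreFun κ, κ < #(F '' Nbhd κ s) → #ι ≤ #(F '' Nbhd κ s \ B : Set _) := by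
    intro s hs
    by_contra! hsmall
    refine hs.not_ge ((le_mk_sdiff_add_mk _ B).trans ?_)
    calc _ ≤ κ + κ := add_le_add (hsmall.le.trans hι.le) hB
      _ = κ := add_eq_self hκ.aleph0_le
  let Node := {s : PreFun κ // κ < #(F '' Nbhd κ s)}
  have hchildren : ∀ p : Node, ∃ (c : ι → Node) (β : K κ),
      (∀ i, Nbhd κ (c i).1 ⊆ Nbhd κ p.1) ∧ ∀ i j, i ≠ j → ∀ z ∈ Nbhd κ (c i).1,
        ∀ w ∈ Nbhd κ (c j).1, resT κ (F z) β ≠ resT κ (F w) β := by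
    intro p
    obtain ⟨c, β, hc, hcB, hsep⟩ := exists_splitting hκ hF hι (hsplit p.1 p.2)
    exact ⟨fun i => ⟨c i, not_le.1 fun h => hcB i (hsmall _ h)⟩,
      β, hc, hsep⟩
  choose c β hc hsep using hchildren
  let root : Node := ⟨resT κ (fun _ => ⊥) ⊥, by rwa [Nbhd_resT_bot, image_univ]⟩
  let N : List ι → Node := fun l => l.foldr (fun i p => c p i) root
  obtain ⟨A, hA⟩ := exists_forall_lt_of_isRegular hκ (fun l => β (N l))
    ((mk_list_le_max ι).trans_lt (max_lt hκℵ hι))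
  exact ⟨A, mk_arrow_nat_le_of_splitting_scheme (N := fun l => (N l).1)
    (fun l i => hc (N l) i) (fun l => hsep (N l)) fun l => (hA l).le⟩

end

/-- Assume `κ = μ⁺ = 2^μ` for a singular cardinal `μ` of countable
cofinality.  If `T` is a `κ`-Kurepa subtree of `^{<κ}κ`, then `[T]` is not a continuous
image of `^κκ`. -/
theorem kurepa_not_continuous_image_of_succ_countable_cof
    (μ κ : Cardinal.{u}) (hμ : ℵ₀ < μ) (hcof : μ.ord.cof = ℵ₀)
    (hsucc : κ = Order.succ μ) (h2 : κ = 2 ^ μ)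
    (T : Set (PreFun κ)) (hT : IsKurepa κ T) :
    ¬ IsContImage κ (branches κ T) := by
  let _ := baire κ
  rintro ⟨f, hf, hsurj⟩
  have hκ : κ.IsRegular := hsucc ▸ isRegular_succ hμ.le
  have hμκ : μ < κ := hsucc ▸ Order.lt_succ μ
  have hPre : #(PreFun κ) ≤ κ := mk_preFun_le hκ.aleph0_le fun ν hν => by
    rw [h2]
    exact two_power_power_le hμ.le (Order.lt_succ_iff.1 (hsucc ▸ hν))
  let F : (K κ → K κ) → K κ → K κ := Subtype.val ∘ f
  have hrange : range F = branches κ T := by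
    rw [range_comp, hsurj.range_eq, image_univ, Subtype.range_coe]
  obtain ⟨A, hA⟩ := exists_mk_arrow_nat_le_mk_range_resT hκ (hμ.trans hμκ) hPre
    (continuous_subtype_val.comp hf) (by rw [hrange]; exact (Order.lt_succ κ).trans_le hT.2.2)
    (ι := μ.out) (by rwa [mk_out])
  have hlevel : range (fun x => resT κ (F x) A) ⊆ level κ T A := by
    rintro _ ⟨x, rfl⟩
    exact ⟨(f x).2 A, rfl⟩
  refine (hT.2.1 A).2.not_ge ?_
  calc κ ≤ μ ^ ℵ₀ := hsucc ▸ Order.succ_le_of_lt (hcof ▸ lt_power_cof_ord hμ.le)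
    _ = #(ℕ → μ.out) := by simp
    _ ≤ #(range fun x => resT κ (F x) A) := hA
    _ ≤ #(level κ T A) := mk_le_mk_of_subset hlevel

end GBaire
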